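/- Let an infinite run (N = ∞) of the continued fraction algorithm on input z ∈ ℂ be given, and let p, q ∈ 𝒪 with q ≠ 0 be such that p·q_m ≠ q·p_m for every m ≥ 1 (i.e., p/q is not a convergent of the run). Then for every n ≥ 1: |q_n·(q_n·z − p_n)| < 4·ε·μ²·|q·(q·z − p)|/(1 − ε²)². -/

import Mathlib

/-!
Write `e_m = q_m z - p_m`. The recurrences for `p_m, q_m` give `e_{m-1} = -z_m e_m`, hence
`|e_{m+1}| ≤ ε |e_m|`, and the determinant identity `q_{m+1} e_m - q_m e_{m+1} = ±b_{m+1}`.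
Together they bound `|q_m e_m| < εμ/(1 - ε²)` and `|q_{m+1} e_m| < μ/(1 - ε²)`.
On the other side, nonzero elements of `𝒪` have absolute value at least `1`, and
`q e_m - q_m (q z - p) = p q_m - q p_m ≠ 0`. If `|q (q z - p)| < (1 - ε²)/(4μ)`, this forces
`|q e_m| ≥ 1/2` for every `m` by induction, contradicting `e_m → 0`. Combining the two bounds gives
the theorem.
-/

noncomputable section

namespace CFNE

/-- τ = (Δ + i·√|Δ|)/2. -/
def tau (Δ : ℤ) : ℂ := ((Δ : ℂ) + Complex.I * (Real.sqrt |(Δ : ℝ)|)) / 2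

/-- The imaginary quadratic order 𝒪 = ℤ[τ] of discriminant Δ, as a subring of ℂ. -/
def O (Δ : ℤ) : Subring ℂ := Subring.closure {tau Δ}

/-- A (nonzero or zero) ideal of 𝒪, presented as a subset of ℂ. -/
structure IdealS (Δ : ℤ) where
  carrier : Set ℂ
  subset : carrier ⊆ (O Δ : Set ℂ)
  zero_mem : (0 : ℂ) ∈ carrier
  add_mem : ∀ x ∈ carrier, ∀ y ∈ carrier, x + y ∈ carrier
  neg_mem : ∀ x ∈ carrier, -x ∈ carrier
  smul_mem : ∀ r ∈ (O Δ : Set ℂ), ∀ x ∈ carrier, r * x ∈ carrier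

/-- The ideal as an additive subgroup of ℂ. -/
def IdealS.toAddSubgroup {Δ : ℤ} (I : IdealS Δ) : AddSubgroup ℂ where
  carrier := I.carrier
  zero_mem' := I.zero_mem
  add_mem' := fun hx hy => I.add_mem _ hx _ hy
  neg_mem' := fun hx => I.neg_mem _ hx

/-- The norm of an ideal: the index [𝒪 : 𝔟]. -/
def IdealS.norm {Δ : ℤ} (I : IdealS Δ) : ℕ :=
  I.toAddSubgroup.relIndex (O Δ).toAddSubgroup

/-- The ideal is nonzero. -/
def IdealS.Nonzero {Δ : ℤ} (I : IdealS Δ) : Prop := ∃ x ∈ I.carrier, x ≠ 0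

/-- Two nonzero ideals lie in the same class if x·𝔞 = y·𝔟 for some nonzero x, y ∈ 𝒪. -/
def SameClass {Δ : ℤ} (I J : IdealS Δ) : Prop :=
  ∃ x ∈ (O Δ : Set ℂ), ∃ y ∈ (O Δ : Set ℂ), x ≠ 0 ∧ y ≠ 0 ∧
    (fun t => x * t) '' I.carrier = (fun t => y * t) '' J.carrier

/-- A reduced ideal: a nonzero ideal of minimal norm in its ideal class. -/
def IsReduced {Δ : ℤ} (I : IdealS Δ) : Prop :=
  I.Nonzero ∧ ∀ J : IdealS Δ, J.Nonzero → SameClass I J → I.norm ≤ J.norm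

/-- The inverse fractional ideal 𝔟⁻¹ = {x ∈ ℂ : x·𝔟 ⊆ 𝒪}. -/
def invSet {Δ : ℤ} (I : IdealS Δ) : Set ℂ :=
  {x : ℂ | ∀ y ∈ I.carrier, x * y ∈ (O Δ : Set ℂ)}

/-- The fractional ideal a·𝔟 + b·𝔟⁻¹, as a subset of ℂ. -/
def combSet {Δ : ℤ} (I : IdealS Δ) (a b : ℂ) : Set ℂ :=
  {u : ℂ | ∃ s ∈ I.carrier, ∃ t ∈ invSet I, u = a * s + b * t}

/-- The ideal x·𝒪 + y·𝒪 of 𝒪 generated by x and y, as a subset of ℂ. -/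
def genSet (Δ : ℤ) (x y : ℂ) : Set ℂ :=
  {u : ℂ | ∃ s ∈ (O Δ : Set ℂ), ∃ t ∈ (O Δ : Set ℂ), u = x * s + y * t}

/-- The set is the carrier of a reduced ideal of 𝒪. -/
def IsReducedSet (Δ : ℤ) (S : Set ℂ) : Prop :=
  ∃ J : IdealS Δ, IsReduced J ∧ J.carrier = S

/-- B is admissible with ε ∈ (0,1): B is a nonempty finite subset of 𝒪 ∖ {0}, and for every
reduced ideal 𝔟 with 𝔟 ∩ B ≠ ∅, the discs D(a/b, ε/|b|) over b ∈ 𝔟 ∩ B, a ∈ 𝔟⁻¹ with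
a·𝔟 + b·𝔟⁻¹ reduced, cover ℂ. -/
def Admissible (Δ : ℤ) (B : Set ℂ) (ε : ℝ) : Prop :=
  B.Nonempty ∧ B.Finite ∧ B ⊆ (O Δ : Set ℂ) ∧ (0 : ℂ) ∉ B ∧
  ∀ I : IdealS Δ, IsReduced I → (I.carrier ∩ B).Nonempty →
    ∀ z : ℂ, ∃ b ∈ I.carrier ∩ B, ∃ a ∈ invSet I,
      IsReducedSet Δ (combSet I a b) ∧ ‖z - a / b‖ ≤ ε / ‖b‖

/-- μ = max{|b| : b ∈ B}. -/
def mu (B : Set ℂ) : ℝ := sSup ((fun w : ℂ => ‖w‖) '' B)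

/-- A run of the continued fraction algorithm of length N ∈ ℕ ∪ {∞} on input z. -/
structure Run (Δ : ℤ) (B : Set ℂ) (ε : ℝ) (z : ℂ) (N : ℕ∞) where
  a : ℤ → ℂ
  b : ℤ → ℂ
  p : ℤ → ℂ
  q : ℤ → ℂ
  zs : ℤ → ℂ
  b_zero : b 0 = 1
  p_neg_one : p (-1) = 0
  q_neg_one : q (-1) = 1
  p_zero : p 0 = 1
  q_zero : q 0 = 0
  zs_zero : zs 0 = z
  ha : ∀ n : ℕ, 1 ≤ n → (n : ℕ∞) ≤ N → a n ∈ O Δ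
  hb : ∀ n : ℕ, 1 ≤ n → (n : ℕ∞) ≤ N → b n ∈ B
  hne : ∀ n : ℕ, 1 ≤ n → (n : ℕ∞) ≤ N → b n * zs ((n : ℤ) - 1) - a n ≠ 0
  hclose : ∀ n : ℕ, 1 ≤ n → (n : ℕ∞) ≤ N →
    ‖b n * zs ((n : ℤ) - 1) - a n‖ ≤ ε * ‖b ((n : ℤ) - 1)‖
  hp : ∀ n : ℕ, 1 ≤ n → (n : ℕ∞) ≤ N →
    p n = (a n * p ((n : ℤ) - 1) + b n * p ((n : ℤ) - 2)) / b ((n : ℤ) - 1)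
  hq : ∀ n : ℕ, 1 ≤ n → (n : ℕ∞) ≤ N →
    q n = (a n * q ((n : ℤ) - 1) + b n * q ((n : ℤ) - 2)) / b ((n : ℤ) - 1)
  hz : ∀ n : ℕ, 1 ≤ n → (n : ℕ∞) ≤ N →
    zs n = b ((n : ℤ) - 1) / (b n * zs ((n : ℤ) - 1) - a n)
  hpO : ∀ n : ℕ, 1 ≤ n → (n : ℕ∞) ≤ N → p n ∈ O Δ
  hqO : ∀ n : ℕ, 1 ≤ n → (n : ℕ∞) ≤ N → q n ∈ O Δ
  hred : ∀ n : ℕ, 1 ≤ n → (n : ℕ∞) ≤ N → IsReducedSet Δ (genSet Δ (p n) (q n))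


section Integrality

variable {Δ : ℤ}

lemma tau_re : (tau Δ).re = Δ / 2 := by simp [tau]

lemma tau_im : (tau Δ).im = Real.sqrt |(Δ : ℝ)| / 2 := by simp [tau]

lemma exists_four_mul_eq_sq_sub (hΔmod : Δ % 4 = 0 ∨ Δ % 4 = 1) :
    ∃ k : ℤ, 4 * k = Δ ^ 2 - Δ := by
  rcases hΔmod with h | h
  · exact ⟨Δ / 4 * (Δ - 1), by rw [← mul_assoc, Int.mul_ediv_cancel' (by omega)]; ring⟩
  · exact ⟨Δ * ((Δ - 1) / 4), by rw [mul_left_comm, Int.mul_ediv_cancel' (by omega)]; ring⟩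

lemma sqrt_abs_sq (hΔneg : Δ < 0) : Real.sqrt |(Δ : ℝ)| ^ 2 = -Δ := by
  rw [Real.sq_sqrt (abs_nonneg _), abs_of_neg (by exact_mod_cast hΔneg)]

lemma tau_sq (hΔneg : Δ < 0) {k : ℤ} (hk : 4 * k = Δ ^ 2 - Δ) :
    tau Δ ^ 2 = Δ * tau Δ - k := by
  have hsqrt : ((Real.sqrt |(Δ : ℝ)| : ℝ) : ℂ) ^ 2 = -Δ := by
    exact_mod_cast sqrt_abs_sq hΔneg
  have hk' : (4 * k : ℂ) = Δ ^ 2 - Δ := by exact_mod_cast hk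
  unfold tau
  linear_combination (-1 / 4 : ℂ) * hsqrt + (1 / 4 : ℂ) * hk' +
    (Real.sqrt |(Δ : ℝ)| : ℂ) ^ 2 / 4 * Complex.I_sq

lemma exists_eq_int_add_int_mul_tau (hΔneg : Δ < 0) (hΔmod : Δ % 4 = 0 ∨ Δ % 4 = 1)
    {x : ℂ} (hx : x ∈ O Δ) : ∃ a b : ℤ, x = a + b * tau Δ := by
  obtain ⟨k, hk⟩ := exists_four_mul_eq_sq_sub hΔmod
  induction hx using Subring.closure_induction with
  | mem x hx => exact ⟨0, 1, by rw [Set.mem_singleton_iff.mp hx]; push_cast; ring⟩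
  | zero => exact ⟨0, 0, by push_cast; ring⟩
  | one => exact ⟨1, 0, by push_cast; ring⟩
  | add x y _ _ hx hy =>
    obtain ⟨a, b, rfl⟩ := hx
    obtain ⟨c, d, rfl⟩ := hy
    exact ⟨a + c, b + d, by push_cast; ring⟩
  | neg x _ hx =>
    obtain ⟨a, b, rfl⟩ := hx
    exact ⟨-a, -b, by push_cast; ring⟩
  | mul x y _ _ hx hy =>
    obtain ⟨a, b, rfl⟩ := hx
    obtain ⟨c, d, rfl⟩ := hy
    exact ⟨a * c - k * b * d, a * d + b * c + Δ * b * d, by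
      push_cast; linear_combination (b * d : ℂ) * tau_sq hΔneg hk⟩

lemma normSq_int_add_int_mul_tau (hΔneg : Δ < 0) {k : ℤ} (hk : 4 * k = Δ ^ 2 - Δ) (a b : ℤ) :
    Complex.normSq (a + b * tau Δ) = ((a ^ 2 + a * b * Δ + b ^ 2 * k : ℤ) : ℝ) := by
  have hk' : (4 * k : ℝ) = Δ ^ 2 - Δ := by exact_mod_cast hk
  simp only [Complex.normSq_apply, Complex.add_re, Complex.add_im, Complex.mul_re,
    Complex.mul_im, Complex.intCast_re, Complex.intCast_im, tau_re, tau_im]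
  push_cast
  linear_combination (b ^ 2 / 4 : ℝ) * sqrt_abs_sq hΔneg - (b ^ 2 / 4 : ℝ) * hk'

lemma one_le_norm_of_mem_O (hΔneg : Δ < 0) (hΔmod : Δ % 4 = 0 ∨ Δ % 4 = 1)
    {x : ℂ} (hx : x ∈ O Δ) (hx0 : x ≠ 0) : 1 ≤ ‖x‖ := by
  obtain ⟨a, b, rfl⟩ := exists_eq_int_add_int_mul_tau hΔneg hΔmod hx
  obtain ⟨k, hk⟩ := exists_four_mul_eq_sq_sub hΔmod
  have hpos := Complex.normSq_pos.mpr hx0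
  rw [normSq_int_add_int_mul_tau hΔneg hk, Int.cast_pos] at hpos
  have hone : (1 : ℝ) ≤ ‖(a : ℂ) + b * tau Δ‖ ^ 2 := by
    rw [Complex.sq_norm, normSq_int_add_int_mul_tau hΔneg hk]
    exact_mod_cast hpos
  rwa [one_le_sq_iff_one_le_abs, abs_norm] at hone

end Integrality

lemma norm_le_mu {B : Set ℂ} (hBfin : B.Finite) {b : ℂ} (hb : b ∈ B) : ‖b‖ ≤ mu B :=
  le_csSup (hBfin.image _).bddAbove ⟨b, hb, rfl⟩

lemma mu_pos {B : Set ℂ} (hBne : B.Nonempty) (hBfin : B.Finite) (hB0 : (0 : ℂ) ∉ B) :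
    0 < mu B := by
  obtain ⟨b, hb⟩ := hBne
  exact (norm_pos_iff.mpr (ne_of_mem_of_not_mem hb hB0)).trans_le (norm_le_mu hBfin hb)

namespace Run

variable {Δ : ℤ} {B : Set ℂ} {ε : ℝ} {z : ℂ} (R : Run Δ B ε z ⊤)

def err (m : ℤ) : ℂ := R.q m * z - R.p m

lemma b_ne_zero (hB0 : (0 : ℂ) ∉ B) (m : ℕ) : R.b m ≠ 0 := by
  rcases m with _ | m
  · simp [R.b_zero]
  · exact fun h => hB0 (h ▸ R.hb (m + 1) (by omega) le_top)

lemma norm_b_le_mu (hBfin : B.Finite) {m : ℕ} (hm : 1 ≤ m) : ‖R.b m‖ ≤ mu B :=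
  norm_le_mu hBfin (R.hb m hm le_top)

lemma p_succ_mul_b (hB0 : (0 : ℂ) ∉ B) (m : ℕ) :
    R.p (m + 1) * R.b m = R.a (m + 1) * R.p m + R.b (m + 1) * R.p (m - 1) := by
  have h := R.hp (m + 1) (by omega) le_top
  rw [show ((m + 1 : ℕ) : ℤ) - 2 = m - 1 by omega, show ((m + 1 : ℕ) : ℤ) - 1 = m by omega,
    Nat.cast_succ] at h
  rw [h, div_mul_cancel₀ _ (R.b_ne_zero hB0 m)]

lemma q_succ_mul_b (hB0 : (0 : ℂ) ∉ B) (m : ℕ) :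
    R.q (m + 1) * R.b m = R.a (m + 1) * R.q m + R.b (m + 1) * R.q (m - 1) := by
  have h := R.hq (m + 1) (by omega) le_top
  rw [show ((m + 1 : ℕ) : ℤ) - 2 = m - 1 by omega, show ((m + 1 : ℕ) : ℤ) - 1 = m by omega,
    Nat.cast_succ] at h
  rw [h, div_mul_cancel₀ _ (R.b_ne_zero hB0 m)]

lemma zs_succ (m : ℕ) : R.zs (m + 1) = R.b m / (R.b (m + 1) * R.zs m - R.a (m + 1)) := by
  have h := R.hz (m + 1) (by omega) le_top
  rwa [show ((m + 1 : ℕ) : ℤ) - 1 = m by omega, Nat.cast_succ] at h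

lemma norm_b_succ_mul_zs_sub_le (m : ℕ) :
    ‖R.b (m + 1) * R.zs m - R.a (m + 1)‖ ≤ ε * ‖R.b m‖ := by
  have h := R.hclose (m + 1) (by omega) le_top
  rwa [show ((m + 1 : ℕ) : ℤ) - 1 = m by omega, Nat.cast_succ] at h

lemma b_succ_mul_zs_sub_ne_zero (m : ℕ) : R.b (m + 1) * R.zs m - R.a (m + 1) ≠ 0 := by
  have h := R.hne (m + 1) (by omega) le_top
  rwa [show ((m + 1 : ℕ) : ℤ) - 1 = m by omega, Nat.cast_succ] at h

lemma p_mul_q_pred_sub (hB0 : (0 : ℂ) ∉ B) (m : ℕ) :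
    R.p m * R.q (m - 1) - R.q m * R.p (m - 1) = (-1) ^ m * R.b m := by
  induction m with
  | zero => simp [R.p_zero, R.q_zero, R.p_neg_one, R.q_neg_one, R.b_zero]
  | succ m ih =>
    push_cast
    rw [add_sub_cancel_right]
    refine mul_right_cancel₀ (R.b_ne_zero hB0 m) ?_
    linear_combination R.q m * R.p_succ_mul_b hB0 m - R.p m * R.q_succ_mul_b hB0 m -
      R.b (m + 1) * ih

lemma q_succ_mul_err_sub (hB0 : (0 : ℂ) ∉ B) (m : ℕ) :
    R.q (m + 1) * R.err m - R.q m * R.err (m + 1) = (-1) ^ (m + 1) * R.b (m + 1) := by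
  have h := R.p_mul_q_pred_sub hB0 (m + 1)
  push_cast at h
  rw [add_sub_cancel_right] at h
  unfold err
  linear_combination h

lemma err_succ_mul_b (hB0 : (0 : ℂ) ∉ B) (m : ℕ) :
    R.err (m + 1) * R.b m = R.a (m + 1) * R.err m + R.b (m + 1) * R.err (m - 1) := by
  unfold err
  linear_combination z * R.q_succ_mul_b hB0 m - R.p_succ_mul_b hB0 m

lemma err_pred (hB0 : (0 : ℂ) ∉ B) (m : ℕ) : R.err (m - 1) = -R.zs m * R.err m := by
  induction m with
  | zero => simp [err, R.p_zero, R.q_zero, R.p_neg_one, R.q_neg_one, R.zs_zero]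
  | succ m ih =>
    have h := R.err_succ_mul_b hB0 m
    push_cast
    rw [ih] at h
    rw [add_sub_cancel_right, R.zs_succ]
    field_simp [R.b_succ_mul_zs_sub_ne_zero m]
    linear_combination h

lemma err_succ_mul_b_eq_neg_mul (hB0 : (0 : ℂ) ∉ B) (m : ℕ) :
    R.err (m + 1) * R.b m = -(R.b (m + 1) * R.zs m - R.a (m + 1)) * R.err m := by
  have h := R.err_succ_mul_b hB0 m
  rw [R.err_pred hB0] at h
  linear_combination h

lemma norm_mul_err_succ_le (hB0 : (0 : ℂ) ∉ B) (x : ℂ) (m : ℕ) :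
    ‖x * R.err (m + 1)‖ ≤ ε * ‖x * R.err m‖ := by
  have hb := norm_pos_iff.mpr (R.b_ne_zero hB0 m)
  have h := congrArg norm (R.err_succ_mul_b_eq_neg_mul hB0 m)
  rw [norm_mul, norm_mul, norm_neg] at h
  have key : ‖R.err (m + 1)‖ * ‖R.b m‖ ≤ ε * ‖R.err m‖ * ‖R.b m‖ := by
    rw [h, mul_right_comm]
    exact mul_le_mul_of_nonneg_right (R.norm_b_succ_mul_zs_sub_le m) (norm_nonneg _)
  rw [norm_mul, norm_mul, mul_left_comm]
  exact mul_le_mul_of_nonneg_left (le_of_mul_le_mul_right key hb) (norm_nonneg x)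

lemma norm_err_le_pow (hB0 : (0 : ℂ) ∉ B) (hε : 0 ≤ ε) (m : ℕ) : ‖R.err m‖ ≤ ε ^ m := by
  induction m with
  | zero => simp [err, R.p_zero, R.q_zero]
  | succ m ih =>
    have h := R.norm_mul_err_succ_le hB0 1 m
    rw [one_mul, one_mul] at h
    calc ‖R.err (m + 1)‖ ≤ ε * ‖R.err m‖ := by exact_mod_cast h
      _ ≤ ε * ε ^ m := mul_le_mul_of_nonneg_left ih hε
      _ = ε ^ (m + 1) := (pow_succ' ε m).symm

lemma norm_q_succ_mul_err_le (hB0 : (0 : ℂ) ∉ B) (hBfin : B.Finite) (m : ℕ) :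
    ‖R.q (m + 1) * R.err m‖ ≤ ε * ‖R.q m * R.err m‖ + mu B := by
  rw [eq_add_of_sub_eq' (R.q_succ_mul_err_sub hB0 m)]
  refine (norm_add_le _ _).trans (add_le_add (R.norm_mul_err_succ_le hB0 _ m) ?_)
  simpa using R.norm_b_le_mu hBfin (m := m + 1) (by omega)

lemma norm_q_succ_mul_err_lt_of_lt (hB0 : (0 : ℂ) ∉ B) (hBfin : B.Finite) (hε0 : 0 < ε)
    (hε1 : ε < 1) {m : ℕ} (h : ‖R.q m * R.err m‖ < ε * mu B / (1 - ε ^ 2)) :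
    ‖R.q (m + 1) * R.err m‖ < mu B / (1 - ε ^ 2) := by
  have hε2 : 0 < 1 - ε ^ 2 := by nlinarith
  calc ‖R.q (m + 1) * R.err m‖ ≤ ε * ‖R.q m * R.err m‖ + mu B :=
        R.norm_q_succ_mul_err_le hB0 hBfin m
    _ < ε * (ε * mu B / (1 - ε ^ 2)) + mu B := by gcongr
    _ = mu B / (1 - ε ^ 2) := by field_simp; ring

lemma norm_q_mul_err_lt (hB0 : (0 : ℂ) ∉ B) (hBfin : B.Finite) (hε0 : 0 < ε) (hε1 : ε < 1)
    (m : ℕ) : ‖R.q m * R.err m‖ < ε * mu B / (1 - ε ^ 2) := by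
  have hε2 : 0 < 1 - ε ^ 2 := by nlinarith
  induction m with
  | zero =>
    have := mu_pos ⟨_, R.hb 1 le_rfl le_top⟩ hBfin hB0
    simp only [Nat.cast_zero, R.q_zero, zero_mul, norm_zero]
    positivity
  | succ m ih =>
    push_cast
    calc ‖R.q (m + 1) * R.err (m + 1)‖ ≤ ε * ‖R.q (m + 1) * R.err m‖ :=
          R.norm_mul_err_succ_le hB0 _ m
      _ < ε * (mu B / (1 - ε ^ 2)) := by
          gcongr; exact R.norm_q_succ_mul_err_lt_of_lt hB0 hBfin hε0 hε1 ih
      _ = ε * mu B / (1 - ε ^ 2) := by ring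

lemma norm_q_succ_mul_err_lt (hB0 : (0 : ℂ) ∉ B) (hBfin : B.Finite) (hε0 : 0 < ε)
    (hε1 : ε < 1) (m : ℕ) : ‖R.q (m + 1) * R.err m‖ < mu B / (1 - ε ^ 2) :=
  R.norm_q_succ_mul_err_lt_of_lt hB0 hBfin hε0 hε1 (R.norm_q_mul_err_lt hB0 hBfin hε0 hε1 m)

lemma one_le_norm_mul_err_sub (hΔneg : Δ < 0) (hΔmod : Δ % 4 = 0 ∨ Δ % 4 = 1) {p q : ℂ}
    (hp : p ∈ O Δ) (hq : q ∈ O Δ) {m : ℕ} (hm : 1 ≤ m) (hpq : p * R.q m ≠ q * R.p m) :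
    1 ≤ ‖q * R.err m - R.q m * (q * z - p)‖ := by
  have h : q * R.err m - R.q m * (q * z - p) = p * R.q m - q * R.p m := by unfold err; ring
  rw [h]
  exact one_le_norm_of_mem_O hΔneg hΔmod
    (sub_mem (mul_mem hp (R.hqO m hm le_top)) (mul_mem hq (R.hpO m hm le_top)))
    (sub_ne_zero.mpr hpq)

lemma half_le_norm_mul_norm_err (hΔneg : Δ < 0) (hΔmod : Δ % 4 = 0 ∨ Δ % 4 = 1)
    (hB0 : (0 : ℂ) ∉ B) (hBfin : B.Finite) (hε0 : 0 < ε) (hε1 : ε < 1) {p q : ℂ}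
    (hp : p ∈ O Δ) (hq : q ∈ O Δ) (hq0 : q ≠ 0)
    (hnotconv : ∀ m : ℕ, 1 ≤ m → p * R.q m ≠ q * R.p m)
    (hsmall : ‖q‖ * ‖q * z - p‖ < (1 - ε ^ 2) / (4 * mu B)) (m : ℕ) :
    1 / 2 ≤ ‖q‖ * ‖R.err m‖ := by
  have hμ := mu_pos ⟨_, R.hb 1 le_rfl le_top⟩ hBfin hB0
  have hε2 : 0 < 1 - ε ^ 2 := by nlinarith
  induction m with
  | zero =>
    simp only [err, Nat.cast_zero, R.q_zero, R.p_zero, zero_mul, zero_sub, norm_neg, norm_one,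
      mul_one]
    linarith [one_le_norm_of_mem_O hΔneg hΔmod hq hq0]
  | succ m ih =>
    have hfar : ‖R.q (m + 1) * (q * z - p)‖ < 1 / 2 := by
      have h : ‖R.q (m + 1) * (q * z - p)‖ * (‖q‖ * ‖R.err m‖) < 1 / 4 := calc
        _ = ‖R.q (m + 1) * R.err m‖ * (‖q‖ * ‖q * z - p‖) := by simp only [norm_mul]; ring
        _ < mu B / (1 - ε ^ 2) * ((1 - ε ^ 2) / (4 * mu B)) :=
          mul_lt_mul'' (R.norm_q_succ_mul_err_lt hB0 hBfin hε0 hε1 m) hsmall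
            (norm_nonneg _) (by positivity)
        _ = 1 / 4 := by field_simp
      nlinarith [norm_nonneg (R.q (m + 1) * (q * z - p))]
    have hsep := R.one_le_norm_mul_err_sub hΔneg hΔmod hp hq (m := m + 1) (by omega)
      (hnotconv (m + 1) (by omega))
    push_cast at hsep ⊢
    have htri := norm_sub_le (q * R.err (m + 1)) (R.q (m + 1) * (q * z - p))
    rw [norm_mul q] at htri
    linarith

lemma le_norm_mul_norm_sub (hΔneg : Δ < 0) (hΔmod : Δ % 4 = 0 ∨ Δ % 4 = 1)
    (hB0 : (0 : ℂ) ∉ B) (hBfin : B.Finite) (hε0 : 0 < ε) (hε1 : ε < 1) {p q : ℂ}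
    (hp : p ∈ O Δ) (hq : q ∈ O Δ) (hq0 : q ≠ 0)
    (hnotconv : ∀ m : ℕ, 1 ≤ m → p * R.q m ≠ q * R.p m) :
    (1 - ε ^ 2) / (4 * mu B) ≤ ‖q‖ * ‖q * z - p‖ := by
  by_contra! hsmall
  have hq' := norm_pos_iff.mpr hq0
  obtain ⟨m, hm⟩ := exists_pow_lt_of_lt_one (show 0 < 1 / (2 * ‖q‖) by positivity) hε1
  have hhalf := R.half_le_norm_mul_norm_err hΔneg hΔmod hB0 hBfin hε0 hε1 hp hq hq0 hnotconv
    hsmall m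
  have hsmall_err : ‖q‖ * ‖R.err m‖ < 1 / 2 := calc
    ‖q‖ * ‖R.err m‖ ≤ ‖q‖ * ε ^ m := by gcongr; exact R.norm_err_le_pow hB0 hε0.le m
    _ < ‖q‖ * (1 / (2 * ‖q‖)) := by gcongr
    _ = 1 / 2 := by field_simp
  linarith

end Run

theorem stmt9_general (Δ : ℤ) (hΔneg : Δ < 0) (hΔmod : Δ % 4 = 0 ∨ Δ % 4 = 1)
    (B : Set ℂ) (ε : ℝ) (hε0 : 0 < ε) (hε1 : ε < 1) (hadm : Admissible Δ B ε)
    (z : ℂ) (R : Run Δ B ε z ⊤)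
    (p q : ℂ) (hp : p ∈ O Δ) (hq : q ∈ O Δ) (hq0 : q ≠ 0)
    (hnotconv : ∀ m : ℕ, 1 ≤ m → p * R.q m ≠ q * R.p m)
    (n : ℕ) :
    ‖R.q n * (R.q n * z - R.p n)‖ <
      4 * ε * mu B ^ 2 * ‖q * (q * z - p)‖ / (1 - ε ^ 2) ^ 2 := by
  obtain ⟨hBne, hBfin, -, hB0, -⟩ := hadm
  have hμ := mu_pos hBne hBfin hB0
  have hε2 : 0 < 1 - ε ^ 2 := by nlinarith
  have hlower := R.le_norm_mul_norm_sub hΔneg hΔmod hB0 hBfin hε0 hε1 hp hq hq0 hnotconv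
  calc ‖R.q n * R.err n‖ < ε * mu B / (1 - ε ^ 2) := R.norm_q_mul_err_lt hB0 hBfin hε0 hε1 n
    _ = 4 * ε * mu B ^ 2 * ((1 - ε ^ 2) / (4 * mu B)) / (1 - ε ^ 2) ^ 2 := by field_simp
    _ ≤ 4 * ε * mu B ^ 2 * ‖q * (q * z - p)‖ / (1 - ε ^ 2) ^ 2 := by rw [norm_mul]; gcongr

theorem stmt9 (Δ : ℤ) (hΔneg : Δ < 0) (hΔmod : Δ % 4 = 0 ∨ Δ % 4 = 1)
    (B : Set ℂ) (ε : ℝ) (hε0 : 0 < ε) (hε1 : ε < 1) (hadm : Admissible Δ B ε)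
    (z : ℂ) (R : Run Δ B ε z ⊤)
    (p q : ℂ) (hp : p ∈ O Δ) (hq : q ∈ O Δ) (hq0 : q ≠ 0)
    (hnotconv : ∀ m : ℕ, 1 ≤ m → p * R.q m ≠ q * R.p m)
    (n : ℕ) (hn : 1 ≤ n) :
    ‖R.q n * (R.q n * z - R.p n)‖ <
      4 * ε * mu B ^ 2 * ‖q * (q * z - p)‖ / (1 - ε ^ 2) ^ 2 :=
  stmt9_general Δ hΔneg hΔmod B ε hε0 hε1 hadm z R p q hp hq hq0 hnotconv n

end CFNE
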